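/- arXiv:1904.07627 — 6 statements merged into one kernel-verified Lean document; each statement's English description precedes it below -/
import Mathlib

section
/- If a resource measure M satisfies the flag additivity, i.e., M(Σ_i p_i ρ_i ⊗ |φ_i⟩⟨φ_i|) = Σ_i p_i M(ρ_i) for every ensemble {p_i, ρ_i} and every flag basis {|φ_i⟩}, then M satisfies the strong monotonicity: M(ρ) ≥ Σ_i p_i M(ρ_i) whenever a free selective measurement maps ρ to outcome ρ_i with probability p_i. -/
/-- In an abstract quantum resource theory (states, tensor products,
mixtures, free operations, flag bases, free selective measurements), if a resource
measure `M` satisfies the flag additivity, then `M` satisfies the strong monotonicity: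
`M ρ ≥ ∑ i, p i * M (ρs i)` whenever a free selective measurement maps `ρ` to outcome
`ρs i` with probability `p i`. -/
theorem flag_additivity_implies_strong_monotonicity
    (State : Type)
    (tensor : State → State → State)
    (mix : (n : ℕ) → (Fin n → ℝ) → (Fin n → State) → State)
    (M : State → ℝ)
    (FreeOp : (State → State) → Prop)
    (FlagBasis : (n : ℕ) → (Fin n → State) → Prop)
    (FreeMeas : (n : ℕ) → (Fin n → ℝ) → State → (Fin n → State) → Prop)
    -- (M2) monotonicity of `M` under free operations
    (hM2 : ∀ Λ : State → State, FreeOp Λ → ∀ ρ, M (Λ ρ) ≤ M ρ)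
    -- a flag basis of every size exists
    (hFBex : ∀ n : ℕ, ∃ φ : Fin n → State, FlagBasis n φ)
    -- attaching orthogonal flags to the outcomes of a free selective measurement
    -- gives a free operation `ρ ↦ ∑ i p i • (ρs i ⊗ |φ i⟩⟨φ i|)`
    (hFlagged : ∀ (n : ℕ) (p : Fin n → ℝ) (ρ : State) (ρs φ : Fin n → State),
      FreeMeas n p ρ ρs → FlagBasis n φ →
      ∃ Λ : State → State, FreeOp Λ ∧ Λ ρ = mix n p (fun i => tensor (ρs i) (φ i)))
    -- flag additivity of `M`
    (hFA : ∀ (n : ℕ) (p : Fin n → ℝ) (ρs φ : Fin n → State),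
      (∀ i, 0 ≤ p i) → (∑ i, p i = 1) → FlagBasis n φ →
      M (mix n p (fun i => tensor (ρs i) (φ i))) = ∑ i, p i * M (ρs i)) :
    -- strong monotonicity
    ∀ (n : ℕ) (p : Fin n → ℝ) (ρ : State) (ρs : Fin n → State),
      (∀ i, 0 ≤ p i) → (∑ i, p i = 1) → FreeMeas n p ρ ρs →
      ∑ i, p i * M (ρs i) ≤ M ρ := by
  intro n p ρ ρs hp hsum hmeas
  obtain ⟨φ, hφ⟩ := hFBex n
  obtain ⟨Λ, hΛfree, hΛρ⟩ := hFlagged n p ρ ρs φ hmeas hφ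
  calc ∑ i, p i * M (ρs i)
      = M (mix n p (fun i => tensor (ρs i) (φ i))) := (hFA n p ρs φ hp hsum hφ).symm
    _ = M (Λ ρ) := by rw [hΛρ]
    _ ≤ M ρ := hM2 Λ hΛfree ρ
end

section
/- If a resource measure M satisfies the flag additivity, then M is convex: M(Σ_i p_i ρ_i) ≤ Σ_i p_i M(ρ_i) for every finite probability distribution (p_i) and states ρ_i on the same Hilbert space. -/
/-- If a resource measure `M` satisfies the flag additivity, then `M`
is convex: `M (∑ i p i • ρs i) ≤ ∑ i p i * M (ρs i)` for every finite probability
distribution `p` and states `ρs i` on the same Hilbert space. -/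
theorem flag_additivity_implies_convexity
    (State Sys : Type)
    (sys : State → Sys)            -- the system (Hilbert space) a state lives on
    (tensor : State → State → State)
    (mix : (n : ℕ) → (Fin n → ℝ) → (Fin n → State) → State)
    (M : State → ℝ)
    (FreeOp : (State → State) → Prop)
    (FlagBasis : (n : ℕ) → (Fin n → State) → Prop)
    -- (M2) monotonicity of `M` under free operations
    (hM2 : ∀ Λ : State → State, FreeOp Λ → ∀ ρ, M (Λ ρ) ≤ M ρ)
    -- a flag basis of every size exists
    (hFBex : ∀ n : ℕ, ∃ φ : Fin n → State, FlagBasis n φ)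
    -- (T2) discarding the flag system (partial trace) is a free operation
    (hDiscard : ∀ (n : ℕ) (p : Fin n → ℝ) (ρs φ : Fin n → State), FlagBasis n φ →
      ∃ Λ : State → State, FreeOp Λ ∧
        Λ (mix n p (fun i => tensor (ρs i) (φ i))) = mix n p ρs)
    -- flag additivity of `M` (for ensembles of states on one Hilbert space)
    (hFA : ∀ (n : ℕ) (p : Fin n → ℝ) (ρs φ : Fin n → State),
      (∀ i j, sys (ρs i) = sys (ρs j)) →
      (∀ i, 0 ≤ p i) → (∑ i, p i = 1) → FlagBasis n φ →
      M (mix n p (fun i => tensor (ρs i) (φ i))) = ∑ i, p i * M (ρs i)) :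
    -- convexity
    ∀ (n : ℕ) (p : Fin n → ℝ) (ρs : Fin n → State),
      (∀ i j, sys (ρs i) = sys (ρs j)) →
      (∀ i, 0 ≤ p i) → (∑ i, p i = 1) →
      M (mix n p ρs) ≤ ∑ i, p i * M (ρs i) := by
  intro n p ρs hsys hp hp1
  obtain ⟨φ, hφ⟩ := hFBex n
  obtain ⟨Λ, hΛfree, hΛeq⟩ := hDiscard n p ρs φ hφ
  calc M (mix n p ρs) = M (Λ (mix n p (fun i => tensor (ρs i) (φ i)))) := by rw [hΛeq]
    _ ≤ M (mix n p (fun i => tensor (ρs i) (φ i))) := hM2 Λ hΛfree _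
    _ = ∑ i, p i * M (ρs i) := hFA n p ρs φ hsys hp hp1 hφ
end

section
/- If a resource measure M satisfies both strong monotonicity (M(ρ) ≥ Σ_i p_i M(ρ_i) under free selective measurements) and convexity, then M satisfies the flag additivity: M(Σ_i p_i ρ_i ⊗ |φ_i⟩⟨φ_i|) = Σ_i p_i M(ρ_i) for every ensemble {p_i, ρ_i} and every flag basis {|φ_i⟩}. -/
/-- If a resource measure `M` satisfies both strong monotonicity
(under free selective measurements) and convexity, then `M` satisfies the flag
additivity: `M (∑ i p i • (ρs i ⊗ |φ i⟩⟨φ i|)) = ∑ i p i * M (ρs i)` for every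
ensemble `{p i, ρs i}` and every flag basis `{φ i}`. -/
theorem strong_monotonicity_and_convexity_imply_flag_additivity
    (State : Type)
    (tensor : State → State → State)
    (mix : (n : ℕ) → (Fin n → ℝ) → (Fin n → State) → State)
    (M : State → ℝ)
    (Free : State → Prop)
    (FlagBasis : (n : ℕ) → (Fin n → State) → Prop)
    (FreeMeas : (n : ℕ) → (Fin n → ℝ) → State → (Fin n → State) → Prop)
    -- flag-basis states are free
    (hFBfree : ∀ (n : ℕ) (φ : Fin n → State), FlagBasis n φ → ∀ i, Free (φ i))
    -- (T1)+(M2): appending a free state cannot increase `M`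
    (hAppend : ∀ ρ δ : State, Free δ → M (tensor ρ δ) ≤ M ρ)
    -- (T2)+(M2): discarding a subsystem cannot increase `M`
    (hDiscard : ∀ σ τ : State, M σ ≤ M (tensor σ τ))
    -- measuring the flag system of a flagged state is a free selective measurement
    -- with outcome `ρs i ⊗ |φ i⟩⟨φ i|` occurring with probability `p i`
    (hMeasFlag : ∀ (n : ℕ) (p : Fin n → ℝ) (ρs φ : Fin n → State),
      FlagBasis n φ → (∀ i, 0 ≤ p i) → (∑ i, p i = 1) →
      FreeMeas n p (mix n p (fun i => tensor (ρs i) (φ i)))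
        (fun i => tensor (ρs i) (φ i)))
    -- strong monotonicity of `M`
    (hSM : ∀ (n : ℕ) (p : Fin n → ℝ) (ρ : State) (ρs : Fin n → State),
      (∀ i, 0 ≤ p i) → (∑ i, p i = 1) → FreeMeas n p ρ ρs →
      ∑ i, p i * M (ρs i) ≤ M ρ)
    -- convexity of `M`
    (hConv : ∀ (n : ℕ) (p : Fin n → ℝ) (ρs : Fin n → State),
      (∀ i, 0 ≤ p i) → (∑ i, p i = 1) →
      M (mix n p ρs) ≤ ∑ i, p i * M (ρs i)) :
    -- flag additivity
    ∀ (n : ℕ) (p : Fin n → ℝ) (ρs φ : Fin n → State),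
      (∀ i, 0 ≤ p i) → (∑ i, p i = 1) → FlagBasis n φ →
      M (mix n p (fun i => tensor (ρs i) (φ i))) = ∑ i, p i * M (ρs i) := by
  intro n p ρs φ hp hsum hFB
  apply le_antisymm
  · calc M (mix n p fun i => tensor (ρs i) (φ i))
        ≤ ∑ i, p i * M (tensor (ρs i) (φ i)) := hConv n p _ hp hsum
      _ ≤ ∑ i, p i * M (ρs i) := by
          apply Finset.sum_le_sum
          intro i _
          exact mul_le_mul_of_nonneg_left (hAppend _ _ (hFBfree n φ hFB i)) (hp i)
  · calc ∑ i, p i * M (ρs i)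
        ≤ ∑ i, p i * M (tensor (ρs i) (φ i)) := by
          apply Finset.sum_le_sum
          intro i _
          exact mul_le_mul_of_nonneg_left (hDiscard _ _) (hp i)
      _ ≤ M (mix n p fun i => tensor (ρs i) (φ i)) :=
          hSM n p _ _ hp hsum (hMeasFlag n p ρs φ hFB hp hsum)
end

section
/- For a resource measure M in a resource theory with the tensor product structure, the strong monotonicity of M is equivalent to the flag supadditivity: M(Σ_i p_i ρ_i ⊗ |φ_i⟩⟨φ_i|) ≥ Σ_i p_i M(ρ_i) for all ensembles and all flag bases. -/
/-- For a resource measure `M` in a resource theory with the tensor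
product structure, the strong monotonicity of `M` is equivalent to the flag
supadditivity: `M (∑ i p i • (ρs i ⊗ |φ i⟩⟨φ i|)) ≥ ∑ i p i * M (ρs i)` for all
ensembles and all flag bases. -/
theorem strong_monotonicity_iff_flag_supadditivity
    (State : Type)
    (tensor : State → State → State)
    (mix : (n : ℕ) → (Fin n → ℝ) → (Fin n → State) → State)
    (M : State → ℝ)
    (FreeOp : (State → State) → Prop)
    (FlagBasis : (n : ℕ) → (Fin n → State) → Prop)
    (FreeMeas : (n : ℕ) → (Fin n → ℝ) → State → (Fin n → State) → Prop)
    -- (M2) monotonicity of `M` under free operations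
    (hM2 : ∀ Λ : State → State, FreeOp Λ → ∀ ρ, M (Λ ρ) ≤ M ρ)
    -- a flag basis of every size exists
    (hFBex : ∀ n : ℕ, ∃ φ : Fin n → State, FlagBasis n φ)
    -- (T2)+(M2): discarding a subsystem cannot increase `M`
    (hDiscard : ∀ σ τ : State, M σ ≤ M (tensor σ τ))
    -- attaching orthogonal flags to the outcomes of a free selective measurement
    -- is a free operation
    (hFlagged : ∀ (n : ℕ) (p : Fin n → ℝ) (ρ : State) (ρs φ : Fin n → State),
      FreeMeas n p ρ ρs → FlagBasis n φ →
      ∃ Λ : State → State, FreeOp Λ ∧ Λ ρ = mix n p (fun i => tensor (ρs i) (φ i)))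
    -- measuring the flag system of a flagged state is a free selective measurement
    (hMeasFlag : ∀ (n : ℕ) (p : Fin n → ℝ) (ρs φ : Fin n → State),
      FlagBasis n φ → (∀ i, 0 ≤ p i) → (∑ i, p i = 1) →
      FreeMeas n p (mix n p (fun i => tensor (ρs i) (φ i)))
        (fun i => tensor (ρs i) (φ i))) :
    -- strong monotonicity ↔ flag supadditivity
    (∀ (n : ℕ) (p : Fin n → ℝ) (ρ : State) (ρs : Fin n → State),
      (∀ i, 0 ≤ p i) → (∑ i, p i = 1) → FreeMeas n p ρ ρs →
      ∑ i, p i * M (ρs i) ≤ M ρ)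
    ↔
    (∀ (n : ℕ) (p : Fin n → ℝ) (ρs φ : Fin n → State),
      (∀ i, 0 ≤ p i) → (∑ i, p i = 1) → FlagBasis n φ →
      ∑ i, p i * M (ρs i) ≤ M (mix n p (fun i => tensor (ρs i) (φ i)))) := by
  constructor
  · intro hSM n p ρs φ hp hsum hFB
    have h := hSM n p _ _ hp hsum (hMeasFlag n p ρs φ hFB hp hsum)
    refine le_trans (Finset.sum_le_sum fun i _ => ?_) h
    exact mul_le_mul_of_nonneg_left (hDiscard (ρs i) (φ i)) (hp i)
  · intro hFS n p ρ ρs hp hsum hFM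
    obtain ⟨φ, hFB⟩ := hFBex n
    obtain ⟨Λ, hΛ, hΛρ⟩ := hFlagged n p ρ ρs φ hFM hFB
    calc ∑ i, p i * M (ρs i) ≤ M (mix n p (fun i => tensor (ρs i) (φ i))) :=
          hFS n p ρs φ hp hsum hFB
      _ = M (Λ ρ) := by rw [hΛρ]
      _ ≤ M ρ := hM2 Λ hΛ ρ
end

section
/- For a resource measure M in a resource theory with the tensor product structure, the convexity of M is equivalent to the flag subadditivity: M(Σ_i p_i ρ_i ⊗ |φ_i⟩⟨φ_i|) ≤ Σ_i p_i M(ρ_i) for all ensembles and all flag bases. -/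
/-- For a resource measure `M` in a resource theory with the tensor
product structure, the convexity of `M` is equivalent to the flag subadditivity:
`M (∑ i p i • (ρs i ⊗ |φ i⟩⟨φ i|)) ≤ ∑ i p i * M (ρs i)` for all ensembles and all
flag bases. -/
theorem convexity_iff_flag_subadditivity
    (State : Type)
    (tensor : State → State → State)
    (mix : (n : ℕ) → (Fin n → ℝ) → (Fin n → State) → State)
    (M : State → ℝ)
    (Free : State → Prop)
    (FreeOp : (State → State) → Prop)
    (FlagBasis : (n : ℕ) → (Fin n → State) → Prop)
    -- (M2) monotonicity of `M` under free operations
    (hM2 : ∀ Λ : State → State, FreeOp Λ → ∀ ρ, M (Λ ρ) ≤ M ρ)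
    -- a flag basis of every size exists
    (hFBex : ∀ n : ℕ, ∃ φ : Fin n → State, FlagBasis n φ)
    -- flag-basis states are free
    (hFBfree : ∀ (n : ℕ) (φ : Fin n → State), FlagBasis n φ → ∀ i, Free (φ i))
    -- (T1)+(M2): appending a free state cannot increase `M`
    (hAppend : ∀ ρ δ : State, Free δ → M (tensor ρ δ) ≤ M ρ)
    -- (T2) discarding the flag system (partial trace) is a free operation
    (hDiscard : ∀ (n : ℕ) (p : Fin n → ℝ) (ρs φ : Fin n → State), FlagBasis n φ →
      ∃ Λ : State → State, FreeOp Λ ∧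
        Λ (mix n p (fun i => tensor (ρs i) (φ i))) = mix n p ρs) :
    -- convexity ↔ flag subadditivity
    (∀ (n : ℕ) (p : Fin n → ℝ) (ρs : Fin n → State),
      (∀ i, 0 ≤ p i) → (∑ i, p i = 1) →
      M (mix n p ρs) ≤ ∑ i, p i * M (ρs i))
    ↔
    (∀ (n : ℕ) (p : Fin n → ℝ) (ρs φ : Fin n → State),
      (∀ i, 0 ≤ p i) → (∑ i, p i = 1) → FlagBasis n φ →
      M (mix n p (fun i => tensor (ρs i) (φ i))) ≤ ∑ i, p i * M (ρs i)) := by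
  constructor
  · intro hconv n p ρs φ hp hsum hFB
    calc M (mix n p (fun i => tensor (ρs i) (φ i)))
        ≤ ∑ i, p i * M (tensor (ρs i) (φ i)) := hconv n p _ hp hsum
      _ ≤ ∑ i, p i * M (ρs i) := by
          apply Finset.sum_le_sum
          intro i _
          exact mul_le_mul_of_nonneg_left (hAppend (ρs i) (φ i) (hFBfree n φ hFB i)) (hp i)
  · intro hflag n p ρs hp hsum
    obtain ⟨φ, hFB⟩ := hFBex n
    obtain ⟨Λ, hΛfree, hΛeq⟩ := hDiscard n p ρs φ hFB
    calc M (mix n p ρs) = M (Λ (mix n p (fun i => tensor (ρs i) (φ i)))) := by rw [hΛeq]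
      _ ≤ M (mix n p (fun i => tensor (ρs i) (φ i))) := hM2 Λ hΛfree _
      _ ≤ ∑ i, p i * M (ρs i) := hflag n p ρs φ hp hsum hFB
end

section
/- If M is a flag-additive resource measure that is fully additive on each single Hilbert space (M(ρ ⊗ σ) = M(ρ) + M(σ) for ρ, σ states on the same space H), then M is fully additive across different Hilbert spaces: M(ρ ⊗ σ) = M(ρ) + M(σ) for all states ρ on H₁ and σ on H₂. -/
/-- If `M` is a flag-additive resource measure that is fully
additive on each single Hilbert space (`M (ρ ⊗ σ) = M ρ + M σ` for states on the
same space), then `M` is fully additive across different Hilbert spaces: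
`M (ρ ⊗ σ) = M ρ + M σ` for all states `ρ` on `H₁` and `σ` on `H₂`. -/
theorem full_additivity_across_spaces
    (State Sys : Type)
    (sys : State → Sys)            -- the Hilbert space a state lives on
    (prodS : Sys → Sys → Sys)      -- composition of Hilbert spaces
    (tensor : State → State → State)
    (mix : (n : ℕ) → (Fin n → ℝ) → (Fin n → State) → State)
    (M : State → ℝ)
    (Free : State → Prop)
    (FlagBasis : (n : ℕ) → (Fin n → State) → Prop)
    -- the tensor product of states lives on the composite space
    (hSysTensor : ∀ a b : State, sys (tensor a b) = prodS (sys a) (sys b))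
    -- every Hilbert space contains at least one free state
    (hFreeEx : ∀ A : Sys, ∃ δ : State, Free δ ∧ sys δ = A)
    -- the tensor product of free states is free
    (hFreeTensor : ∀ a b : State, Free a → Free b → Free (tensor a b))
    -- appending or discarding a free state leaves `M` unchanged (from (T1),(T2),(M2))
    (hAppendR : ∀ ρ δ : State, Free δ → M (tensor ρ δ) = M ρ)
    (hAppendL : ∀ ρ δ : State, Free δ → M (tensor δ ρ) = M ρ)
    -- `M` is invariant under reordering tensor factors
    (hComm : ∀ a b : State, M (tensor a b) = M (tensor b a))
    (hReorder : ∀ a b c d : State,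
      M (tensor (tensor a b) (tensor c d)) = M (tensor (tensor a d) (tensor b c)))
    -- flag additivity of `M`
    (hFA : ∀ (n : ℕ) (p : Fin n → ℝ) (ρs ψ : Fin n → State),
      (∀ i, 0 ≤ p i) → (∑ i, p i = 1) → FlagBasis n ψ →
      M (mix n p (fun i => tensor (ρs i) (ψ i))) = ∑ i, p i * M (ρs i))
    -- full additivity of `M` on each single Hilbert space
    (hFullSame : ∀ ρ σ : State, sys ρ = sys σ → M (tensor ρ σ) = M ρ + M σ) :
    -- full additivity across different Hilbert spaces
    ∀ ρ σ : State, M (tensor ρ σ) = M ρ + M σ := by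
  intro ρ σ
  obtain ⟨δ₁, hδ₁f, hδ₁⟩ := hFreeEx (sys ρ)
  obtain ⟨δ₂, hδ₂f, hδ₂⟩ := hFreeEx (sys σ)
  have hsys : sys (tensor ρ δ₂) = sys (tensor δ₁ σ) := by
    rw [hSysTensor, hSysTensor, hδ₁, hδ₂]
  have h1 := hFullSame _ _ hsys
  rw [hAppendR ρ δ₂ hδ₂f, hAppendL σ δ₁ hδ₁f, hReorder,
    hAppendR (tensor ρ σ) (tensor δ₂ δ₁) (hFreeTensor _ _ hδ₂f hδ₁f)] at h1
  exact h1
end
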